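/- arXiv:math/0109016 — 6 statements merged into one kernel-verified Lean document; each statement's English description precedes it below -/
import Mathlib

section
/- Let R > 1, θ = arccos(1/R), ψ(μ) = arccos(R cos μ) for μ ∈ [θ, π - θ]. Then ψ is 1/2-Hölder continuous: there exists C > 0 such that |ψ(μ₂) - ψ(μ₁)| ≤ C|μ₂ - μ₁|^{1/2} for all μ₁, μ₂ ∈ [θ, π - θ]. -/
open Real

lemma key_ineq {a b : ℝ} (ha0 : 0 ≤ a) (hb : b ≤ π) (hab : a ≤ b) :
    (b - a) ^ 2 ≤ π ^ 2 / 2 * (Real.cos a - Real.cos b) := by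
  set s := (b - a) / 2 with hs
  set t := (a + b) / 2 with ht
  have hs0 : 0 ≤ s := by simp only [hs]; linarith
  have hspi : s ≤ π / 2 := by
    have : b - a ≤ π := by linarith
    simp only [hs]; linarith
  have hcos : Real.cos a - Real.cos b = 2 * Real.sin t * Real.sin s := by
    have h1 : a = t - s := by rw [hs, ht]; ring
    have h2 : b = t + s := by rw [hs, ht]; ring
    rw [h1, h2, Real.cos_sub, Real.cos_add]; ring
  have hsin_s : 2 / π * s ≤ Real.sin s := Real.mul_le_sin hs0 hspi
  have hst : Real.sin s ≤ Real.sin t := by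
    rcases le_or_gt t (π / 2) with h | h
    · exact Real.sin_le_sin_of_le_of_le_pi_div_two (by linarith [Real.pi_pos]) h
        (by simp only [hs, ht]; linarith)
    · rw [← Real.sin_pi_sub t]
      exact Real.sin_le_sin_of_le_of_le_pi_div_two (by linarith [Real.pi_pos])
        (by linarith) (by simp only [hs, ht]; linarith)
  have hpi := Real.pi_pos
  have hss0 : 0 ≤ Real.sin s := Real.sin_nonneg_of_nonneg_of_le_pi hs0 (by linarith)
  have h2s : 2 * s ≤ π * Real.sin s := by
    have := mul_le_mul_of_nonneg_left hsin_s hpi.le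
    have hc : π * (2 / π * s) = 2 * s := by field_simp
    linarith [hc ▸ this]
  have hba : b - a = 2 * s := by rw [hs]; ring
  rw [hba, hcos]
  nlinarith [mul_le_mul_of_nonneg_right hst hss0, sq_nonneg (π * Real.sin s - 2 * s)]

/-- `ψ(μ) = arccos(R cos μ)` is `1/2`-Hölder continuous on `[θ, π-θ]`. -/
theorem stmt4 (R θ : ℝ) (hR : 1 < R) (hθ : θ = Real.arccos (1 / R))
    (ψ : ℝ → ℝ) (hψ : ∀ μ, ψ μ = Real.arccos (R * Real.cos μ)) :
    ∃ C > 0, ∀ μ₁ ∈ Set.Icc θ (π - θ), ∀ μ₂ ∈ Set.Icc θ (π - θ),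
      |ψ μ₂ - ψ μ₁| ≤ C * |μ₂ - μ₁| ^ ((1:ℝ)/2) := by
  have hR0 : (0:ℝ) < R := by linarith
  refine ⟨π * Real.sqrt R, by positivity, ?_⟩
  -- main estimate, symmetric, so prove for general pair
  have main : ∀ μ₁ ∈ Set.Icc θ (π - θ), ∀ μ₂ ∈ Set.Icc θ (π - θ),
      (ψ μ₂ - ψ μ₁) ^ 2 ≤ π ^ 2 * R * |μ₂ - μ₁| := by
    intro μ₁ h₁ μ₂ h₂
    have hmem : ∀ μ ∈ Set.Icc θ (π - θ), -1 ≤ R * Real.cos μ ∧ R * Real.cos μ ≤ 1 := by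
      intro μ hμ
      have hc1 : Real.cos μ ≤ Real.cos θ := by
        apply Real.cos_le_cos_of_nonneg_of_le_pi
        · rw [hθ]; exact Real.arccos_nonneg _
        · linarith [hμ.2, hμ.1, (hθ ▸ Real.arccos_nonneg (1/R))]
        · exact hμ.1
      have hc2 : Real.cos (π - θ) ≤ Real.cos μ := by
        apply Real.cos_le_cos_of_nonneg_of_le_pi
        · linarith [hμ.1, (hθ ▸ Real.arccos_nonneg (1/R))]
        · linarith [hμ.2, (hθ ▸ Real.arccos_nonneg (1/R))]
        · exact hμ.2
      have h1R : (0:ℝ) < 1 / R := by positivity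
      have h1R1 : 1 / R ≤ 1 := by rw [div_le_one hR0]; linarith
      have hcθ : Real.cos θ = 1 / R := by
        rw [hθ]; exact Real.cos_arccos (by linarith) h1R1
      rw [Real.cos_pi_sub, hcθ] at hc2
      rw [hcθ] at hc1
      have hRR : R * (1 / R) = 1 := by field_simp
      constructor <;>
        nlinarith [mul_le_mul_of_nonneg_left hc1 hR0.le, mul_le_mul_of_nonneg_left hc2 hR0.le]
    obtain ⟨hm1a, hm1b⟩ := hmem μ₁ h₁
    obtain ⟨hm2a, hm2b⟩ := hmem μ₂ h₂
    have hcosψ : ∀ μ ∈ Set.Icc θ (π - θ), Real.cos (ψ μ) = R * Real.cos μ := by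
      intro μ hμ
      rw [hψ μ]
      exact Real.cos_arccos (hmem μ hμ).1 (hmem μ hμ).2
    have hψmem : ∀ μ, 0 ≤ ψ μ ∧ ψ μ ≤ π := by
      intro μ; rw [hψ μ]; exact ⟨Real.arccos_nonneg _, Real.arccos_le_pi _⟩
    -- key inequality applied to ordered pair
    have hk : (ψ μ₂ - ψ μ₁) ^ 2 ≤ π ^ 2 / 2 * |Real.cos (ψ μ₁) - Real.cos (ψ μ₂)| := by
      rcases le_total (ψ μ₁) (ψ μ₂) with h | h
      · have := key_ineq (hψmem μ₁).1 (hψmem μ₂).2 h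
        calc (ψ μ₂ - ψ μ₁) ^ 2 ≤ π ^ 2 / 2 * (Real.cos (ψ μ₁) - Real.cos (ψ μ₂)) := this
          _ ≤ π ^ 2 / 2 * |Real.cos (ψ μ₁) - Real.cos (ψ μ₂)| := by
            gcongr; exact le_abs_self _
      · have := key_ineq (hψmem μ₂).1 (hψmem μ₁).2 h
        calc (ψ μ₂ - ψ μ₁) ^ 2 = (ψ μ₁ - ψ μ₂) ^ 2 := by ring
          _ ≤ π ^ 2 / 2 * (Real.cos (ψ μ₂) - Real.cos (ψ μ₁)) := this
          _ ≤ π ^ 2 / 2 * |Real.cos (ψ μ₁) - Real.cos (ψ μ₂)| := by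
            gcongr; rw [abs_sub_comm]; exact le_abs_self _
    rw [hcosψ μ₁ h₁, hcosψ μ₂ h₂] at hk
    have hcoslip : |Real.cos μ₁ - Real.cos μ₂| ≤ |μ₂ - μ₁| := by
      rw [Real.cos_sub_cos, abs_mul, abs_mul, abs_neg, abs_two]
      have h1 : |Real.sin ((μ₁ + μ₂) / 2)| ≤ 1 :=
        abs_le.2 ⟨Real.neg_one_le_sin _, Real.sin_le_one _⟩
      have h2 : |Real.sin ((μ₁ - μ₂) / 2)| ≤ |(μ₁ - μ₂) / 2| := Real.abs_sin_le_abs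
      have h3 : |(μ₁ - μ₂) / 2| = |μ₂ - μ₁| / 2 := by
        rw [abs_div, abs_sub_comm, abs_two]
      calc 2 * |Real.sin ((μ₁ + μ₂) / 2)| * |Real.sin ((μ₁ - μ₂) / 2)|
          ≤ 2 * 1 * (|μ₂ - μ₁| / 2) := by
            have h2' := h3 ▸ h2
            nlinarith [abs_nonneg (Real.sin ((μ₁ - μ₂) / 2)),
              abs_nonneg (Real.sin ((μ₁ + μ₂) / 2))]
        _ = |μ₂ - μ₁| := by ring
    have hlip : |R * Real.cos μ₁ - R * Real.cos μ₂| ≤ R * |μ₂ - μ₁| := by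
      rw [← mul_sub, abs_mul, abs_of_pos hR0]
      exact mul_le_mul_of_nonneg_left hcoslip hR0.le
    calc (ψ μ₂ - ψ μ₁) ^ 2 ≤ π ^ 2 / 2 * (R * |μ₂ - μ₁|) := by
          exact hk.trans (mul_le_mul_of_nonneg_left hlip (by positivity))
      _ ≤ π ^ 2 * R * |μ₂ - μ₁| := by nlinarith [Real.pi_pos, abs_nonneg (μ₂ - μ₁)]
  intro μ₁ h₁ μ₂ h₂
  have h := main μ₁ h₁ μ₂ h₂
  have habs : |μ₂ - μ₁| ^ ((1:ℝ)/2) = Real.sqrt |μ₂ - μ₁| := (Real.sqrt_eq_rpow _).symm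
  rw [habs]
  calc |ψ μ₂ - ψ μ₁| = Real.sqrt ((ψ μ₂ - ψ μ₁) ^ 2) := (Real.sqrt_sq_eq_abs _).symm
    _ ≤ Real.sqrt (π ^ 2 * R * |μ₂ - μ₁|) := Real.sqrt_le_sqrt h
    _ = π * Real.sqrt R * Real.sqrt |μ₂ - μ₁| := by
        rw [Real.sqrt_mul (by positivity), Real.sqrt_mul (by positivity),
          Real.sqrt_sq Real.pi_pos.le]
end

section
/- Let b ≥ 2, R = (b^{1/2}+b^{-1/2})/2, and k ∈ ℝ with sin k ≠ 0 and R|cos k| ≠ 1. Let q₁ ≠ q₂ solve q² - 2Rq cos k + 1 = 0. For j = 1, 2 define on each interval (n-1, n), n ∈ ℕ, the function y_j(t) = (b^{1/2} sin k(n - t) + q_j sin k(t - n + 1)) q_j^{n-1}. Then each y_j satisfies y'' + k² y = 0 on (n-1, n) and the matching conditions y(n+) = b^{1/2} y(n-), y'(n+) = b^{-1/2} y'(n-) at every n ∈ ℕ. -/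
private lemma comb_hasDerivAt (A B c : ℂ) {f g : ℝ → ℝ} {f' g' : ℝ} {t : ℝ}
    (hf : HasDerivAt f f' t) (hg : HasDerivAt g g' t) :
    HasDerivAt (fun t : ℝ => (A * ((f t : ℝ) : ℂ) + B * ((g t : ℝ) : ℂ)) * c)
      ((A * ((f' : ℝ) : ℂ) + B * ((g' : ℝ) : ℂ)) * c) t :=
  ((hf.ofReal_comp.const_mul A).add (hg.ofReal_comp.const_mul B)).mul_const c

private lemma sin_left (k s t : ℝ) :
    HasDerivAt (fun t : ℝ => Real.sin (k * (s - t))) (-(k * Real.cos (k * (s - t)))) t := by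
  have h1 : HasDerivAt (fun t : ℝ => k * (s - t)) (-k) t := by
    simpa using ((hasDerivAt_id t).const_sub s).const_mul k
  have := (Real.hasDerivAt_sin (k * (s - t))).comp t h1
  exact this.congr_deriv (by ring)

private lemma sin_right (k s t : ℝ) :
    HasDerivAt (fun t : ℝ => Real.sin (k * (t - s + 1))) (k * Real.cos (k * (t - s + 1))) t := by
  have h1 : HasDerivAt (fun t : ℝ => k * (t - s + 1)) k t := by
    simpa using (((hasDerivAt_id t).sub_const s).add_const 1).const_mul k
  have := (Real.hasDerivAt_sin (k * (t - s + 1))).comp t h1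
  exact this.congr_deriv (by ring)

private lemma cos_left (k s t : ℝ) :
    HasDerivAt (fun t : ℝ => Real.cos (k * (s - t))) (k * Real.sin (k * (s - t))) t := by
  have h1 : HasDerivAt (fun t : ℝ => k * (s - t)) (-k) t := by
    simpa using ((hasDerivAt_id t).const_sub s).const_mul k
  have := (Real.hasDerivAt_cos (k * (s - t))).comp t h1
  exact this.congr_deriv (by ring)

private lemma cos_right (k s t : ℝ) :
    HasDerivAt (fun t : ℝ => Real.cos (k * (t - s + 1))) (-(k * Real.sin (k * (t - s + 1)))) t := by
  have h1 : HasDerivAt (fun t : ℝ => k * (t - s + 1)) k t := by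
    simpa using (((hasDerivAt_id t).sub_const s).add_const 1).const_mul k
  have := (Real.hasDerivAt_cos (k * (t - s + 1))).comp t h1
  exact this.congr_deriv (by ring)

private lemma main_hd (A B c : ℂ) (k s t : ℝ) :
    HasDerivAt (fun t : ℝ => (A * ((Real.sin (k * (s - t)) : ℝ) : ℂ)
        + B * ((Real.sin (k * (t - s + 1)) : ℝ) : ℂ)) * c)
      ((A * (((-(k * Real.cos (k * (s - t)))) : ℝ) : ℂ)
        + B * (((k * Real.cos (k * (t - s + 1))) : ℝ) : ℂ)) * c) t :=
  comb_hasDerivAt A B c (sin_left k s t) (sin_right k s t)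

private lemma main_hd2 (A B c : ℂ) (k s t : ℝ) :
    HasDerivAt (fun t : ℝ => (A * (((-(k * Real.cos (k * (s - t)))) : ℝ) : ℂ)
        + B * (((k * Real.cos (k * (t - s + 1))) : ℝ) : ℂ)) * c)
      ((A * (((-(k * (k * Real.sin (k * (s - t))))) : ℝ) : ℂ)
        + B * (((k * (-(k * Real.sin (k * (t - s + 1))))) : ℝ) : ℂ)) * c) t :=
  comb_hasDerivAt A B c (((cos_left k s t).const_mul k).neg) ((cos_right k s t).const_mul k)

/-- For each root `q` of `q² - 2Rq cos k + 1 = 0`, the piecewise function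
`y(t) = (√b sin k(n-t) + q sin k(t-n+1)) q^{n-1}` on `(n-1, n)` satisfies
`y'' + k² y = 0` on each interval and the matching conditions
`y(n+) = √b y(n-)`, `y'(n+) = b^{-1/2} y'(n-)` at every `n ≥ 1`. -/
theorem stmt6 (b : ℕ) (hb : 2 ≤ b) (R k : ℝ)
    (hR : R = (Real.sqrt b + 1 / Real.sqrt b) / 2)
    (hsin : Real.sin k ≠ 0) (hk : R * |Real.cos k| ≠ 1)
    (q₁ q₂ : ℂ) (hne : q₁ ≠ q₂)
    (h1 : q₁ ^ 2 - 2 * (R : ℂ) * (Real.cos k : ℂ) * q₁ + 1 = 0)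
    (h2 : q₂ ^ 2 - 2 * (R : ℂ) * (Real.cos k : ℂ) * q₂ + 1 = 0)
    (Y : ℂ → ℕ → ℝ → ℂ)
    (hY : ∀ q : ℂ, ∀ n : ℕ, ∀ t : ℝ, Y q n t =
      ((Real.sqrt b * Real.sin (k * (n - t)) : ℝ)
        + q * (Real.sin (k * (t - n + 1)) : ℝ)) * q ^ (n - 1)) :
    ∀ q ∈ ({q₁, q₂} : Set ℂ), ∀ n : ℕ, 1 ≤ n →
      (∀ t ∈ Set.Ioo ((n : ℝ) - 1) (n : ℝ),
        deriv (deriv (Y q n)) t + (k : ℂ) ^ 2 * Y q n t = 0) ∧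
      Y q (n + 1) n = (Real.sqrt b : ℂ) * Y q n n ∧
      deriv (Y q (n + 1)) n = (Real.sqrt b : ℂ)⁻¹ * deriv (Y q n) n := by
  intro q hq n hn
  have hroot : q ^ 2 - 2 * (R : ℂ) * (Real.cos k : ℂ) * q + 1 = 0 := by
    simp only [Set.mem_insert_iff, Set.mem_singleton_iff] at hq
    rcases hq with rfl | rfl
    · exact h1
    · exact h2
  have hbpos : (0 : ℝ) < Real.sqrt b := Real.sqrt_pos.mpr (by positivity)
  have hsb : ((Real.sqrt b : ℝ) : ℂ) ≠ 0 := Complex.ofReal_ne_zero.mpr hbpos.ne'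
  set A : ℂ := ((Real.sqrt b : ℝ) : ℂ) with hA
  have hYf : ∀ m : ℕ, Y q m = fun t : ℝ =>
      (A * ((Real.sin (k * ((m : ℝ) - t)) : ℝ) : ℂ)
        + q * ((Real.sin (k * (t - (m : ℝ) + 1)) : ℝ) : ℂ)) * q ^ (m - 1) := by
    intro m; funext t; rw [hY]; push_cast; ring
  have hderiv : ∀ (m : ℕ) (t : ℝ), deriv (Y q m) t =
      (A * (((-(k * Real.cos (k * ((m : ℝ) - t)))) : ℝ) : ℂ)
        + q * (((k * Real.cos (k * (t - (m : ℝ) + 1))) : ℝ) : ℂ)) * q ^ (m - 1) := by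
    intro m t; rw [hYf m]; exact (main_hd A q _ k (m : ℝ) t).deriv
  have hsqb : A * A = (b : ℂ) := by
    rw [hA]; rw [← Complex.ofReal_mul, Real.mul_self_sqrt (by positivity)]; norm_cast
  have key : A * (q ^ 2 + 1) = (A * A + 1) * (q * Complex.cos (k : ℂ)) := by
    have h := hroot
    have hR' : (R : ℂ) = (A + 1 / A) / 2 := by rw [hR]; push_cast; ring
    rw [hR'] at h
    field_simp at h
    
    rw [← Complex.ofReal_cos]
    linear_combination h
  obtain ⟨m, rfl⟩ : ∃ m, n = m + 1 := ⟨n - 1, by omega⟩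
  refine ⟨?_, ?_, ?_⟩
  · intro t ht
    have e1 : deriv (Y q (m + 1)) = fun t : ℝ =>
        (A * (((-(k * Real.cos (k * (((m + 1 : ℕ) : ℝ) - t)))) : ℝ) : ℂ)
          + q * (((k * Real.cos (k * (t - ((m + 1 : ℕ) : ℝ) + 1))) : ℝ) : ℂ)) * q ^ (m + 1 - 1) :=
      funext (hderiv (m + 1))
    rw [e1, (main_hd2 A q _ k ((m + 1 : ℕ) : ℝ) t).deriv, hY]
    push_cast
    ring
  · rw [hY, hY]
    have e1 : Real.sin (k * (((m + 1 + 1 : ℕ) : ℝ) - ((m + 1 : ℕ) : ℝ))) = Real.sin k := by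
      congr 1; push_cast; ring
    have e2 : Real.sin (k * (((m + 1 : ℕ) : ℝ) - ((m + 1 + 1 : ℕ) : ℝ) + 1)) = 0 := by
      rw [show k * (((m + 1 : ℕ) : ℝ) - ((m + 1 + 1 : ℕ) : ℝ) + 1) = 0 by push_cast; ring,
        Real.sin_zero]
    have e3 : Real.sin (k * (((m + 1 : ℕ) : ℝ) - ((m + 1 : ℕ) : ℝ))) = 0 := by
      rw [show k * (((m + 1 : ℕ) : ℝ) - ((m + 1 : ℕ) : ℝ)) = 0 by ring, Real.sin_zero]
    have e4 : Real.sin (k * (((m + 1 : ℕ) : ℝ) - ((m + 1 : ℕ) : ℝ) + 1)) = Real.sin k := by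
      congr 1; ring
    rw [e1, e2, e3, e4]
    simp only [Nat.add_sub_cancel]
    push_cast
    ring
  · rw [hderiv (m + 1 + 1) ((m + 1 : ℕ) : ℝ), hderiv (m + 1) ((m + 1 : ℕ) : ℝ)]
    have c1 : Real.cos (k * (((m + 1 + 1 : ℕ) : ℝ) - ((m + 1 : ℕ) : ℝ))) = Real.cos k := by
      congr 1; push_cast; ring
    have c2 : Real.cos (k * (((m + 1 : ℕ) : ℝ) - ((m + 1 + 1 : ℕ) : ℝ) + 1)) = 1 := by
      rw [show k * (((m + 1 : ℕ) : ℝ) - ((m + 1 + 1 : ℕ) : ℝ) + 1) = 0 by push_cast; ring,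
        Real.cos_zero]
    have c3 : Real.cos (k * (((m + 1 : ℕ) : ℝ) - ((m + 1 : ℕ) : ℝ))) = 1 := by
      rw [show k * (((m + 1 : ℕ) : ℝ) - ((m + 1 : ℕ) : ℝ)) = 0 by ring, Real.cos_zero]
    have c4 : Real.cos (k * (((m + 1 : ℕ) : ℝ) - ((m + 1 : ℕ) : ℝ) + 1)) = Real.cos k := by
      congr 1; ring
    rw [c1, c2, c3, c4]
    simp only [Nat.add_sub_cancel]
    rw [eq_inv_mul_iff_mul_eq₀ hsb]
    push_cast
    linear_combination (k : ℂ) * q ^ m * key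
end

section
/- In the setting of the previous construction, the Wronskian y₁ y₂' - y₁' y₂ is constant on each interval (n-1, n) and equals b^{1/2}(q₂ - q₁) k sin k there; in particular y₁ and y₂ are linearly independent whenever q₁ ≠ q₂ and sin k ≠ 0, k ≠ 0. -/
lemma Ylemma (k : ℝ) (c q : ℂ) (n : ℕ) (t : ℝ) :
    HasDerivAt (fun t : ℝ => ((Real.sqrt c.re * Real.sin (k * (n - t)) : ℝ)
        + q * (Real.sin (k * (t - n + 1)) : ℝ)) * q ^ (n - 1))
      (((Real.sqrt c.re * (Real.cos (k * (n - t)) * (-k)) : ℝ)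
        + q * ((Real.cos (k * (t - n + 1)) * k) : ℝ)) * q ^ (n - 1)) t := by
  have hin1 : HasDerivAt (fun t : ℝ => k * ((n : ℝ) - t)) (-k) t := by
    simpa using ((hasDerivAt_id t).const_sub (n : ℝ)).const_mul k
  have hin2 : HasDerivAt (fun t : ℝ => k * (t - (n : ℝ) + 1)) k t := by
    simpa using (((hasDerivAt_id t).sub_const (n : ℝ)).add_const 1).const_mul k
  have h1 : HasDerivAt (fun t : ℝ => Real.sqrt c.re * Real.sin (k * ((n : ℝ) - t)))
      (Real.sqrt c.re * (Real.cos (k * ((n : ℝ) - t)) * (-k))) t :=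
    ((Real.hasDerivAt_sin _).comp t hin1).const_mul _
  have h2 : HasDerivAt (fun t : ℝ => Real.sin (k * (t - (n : ℝ) + 1)))
      (Real.cos (k * (t - (n : ℝ) + 1)) * k) t :=
    (Real.hasDerivAt_sin _).comp t hin2
  exact ((h1.ofReal_comp.add (h2.ofReal_comp.const_mul q)).mul_const (q ^ (n - 1)))

/-- The Wronskian `y₁ y₂' - y₁' y₂` of the two piecewise solutions is constant on
each interval `(n-1, n)`, equal to `√b (q₂ - q₁) k sin k`; in particular it is
nonzero (so `y₁, y₂` are linearly independent) when `q₁ ≠ q₂`, `sin k ≠ 0`, `k ≠ 0`. -/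
theorem stmt7 (b : ℕ) (hb : 2 ≤ b) (R k : ℝ)
    (hR : R = (Real.sqrt b + 1 / Real.sqrt b) / 2)
    (q₁ q₂ : ℂ) (hprod : q₁ * q₂ = 1)
    (hsum : q₁ + q₂ = 2 * (R : ℂ) * (Real.cos k : ℂ))
    (Y : ℂ → ℕ → ℝ → ℂ)
    (hY : ∀ q : ℂ, ∀ n : ℕ, ∀ t : ℝ, Y q n t =
      ((Real.sqrt b * Real.sin (k * (n - t)) : ℝ)
        + q * (Real.sin (k * (t - n + 1)) : ℝ)) * q ^ (n - 1)) :
    (∀ n : ℕ, 1 ≤ n → ∀ t ∈ Set.Ioo ((n : ℝ) - 1) (n : ℝ),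
      Y q₁ n t * deriv (Y q₂ n) t - deriv (Y q₁ n) t * Y q₂ n t
        = (Real.sqrt b : ℂ) * (q₂ - q₁) * (k : ℂ) * (Real.sin k : ℂ)) ∧
    (q₁ ≠ q₂ → Real.sin k ≠ 0 → k ≠ 0 →
      (Real.sqrt b : ℂ) * (q₂ - q₁) * (k : ℂ) * (Real.sin k : ℂ) ≠ 0) := by
  constructor
  · intro n hn t ht
    have hfun : ∀ q : ℂ, Y q n = fun t : ℝ =>
        ((Real.sqrt b * Real.sin (k * (n - t)) : ℝ)
          + q * (Real.sin (k * (t - n + 1)) : ℝ)) * q ^ (n - 1) := by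
      intro q; funext s; exact hY q n s
    have hd : ∀ q : ℂ, deriv (Y q n) t =
        ((Real.sqrt b * (Real.cos (k * (n - t)) * (-k)) : ℝ)
          + q * ((Real.cos (k * (t - n + 1)) * k) : ℝ)) * q ^ (n - 1) := by
      intro q
      rw [hfun q]
      have := Ylemma k ((b : ℝ) : ℂ) q n t
      simpa using this.deriv
    have hpow : q₁ ^ (n - 1) * q₂ ^ (n - 1) = 1 := by
      rw [← mul_pow, hprod, one_pow]
    have key : Real.sin (k * (n - t)) * Real.cos (k * (t - n + 1))
        + Real.cos (k * (n - t)) * Real.sin (k * (t - n + 1)) = Real.sin k := by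
      rw [← Real.sin_add]; ring_nf
    have keyC : ((Real.sin (k * (n - t)) : ℝ) : ℂ) * ((Real.cos (k * (t - n + 1)) : ℝ) : ℂ)
        + ((Real.cos (k * (n - t)) : ℝ) : ℂ) * ((Real.sin (k * (t - n + 1)) : ℝ) : ℂ)
        = ((Real.sin k : ℝ) : ℂ) := by exact_mod_cast key
    rw [hY q₁ n t, hY q₂ n t, hd q₁, hd q₂]
    push_cast at keyC ⊢

    linear_combination ((Real.sqrt b : ℂ) * (q₂ - q₁) * k * Complex.sin (k : ℂ)) * hpow
      + ((Real.sqrt b : ℂ) * (q₂ - q₁) * k * (q₁ ^ (n - 1) * q₂ ^ (n - 1))) * keyC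
  · intro hne hs hk
    have hb0 : (Real.sqrt b : ℂ) ≠ 0 := by
      simp [Real.sqrt_ne_zero']
      positivity
    exact mul_ne_zero (mul_ne_zero (mul_ne_zero hb0 (sub_ne_zero.2 (Ne.symm hne)))
      (by exact_mod_cast hk)) (by exact_mod_cast hs)
end

section
/- Let b ≥ 2, R = (√b + 1/√b)/2, k > 0 with k/π ∉ ℕ and R|cos k| ≠ 1, and let q₁ ≠ q₂ be the roots of q² - 2Rq cos k + 1 = 0. Define y₀(t) = b^{1/2} (q₂^{n-1} - q₁^{n-1})/(q₂ - q₁) · sin k(n-t) + (q₂^n - q₁^n)/(q₂ - q₁) · sin k(t - n + 1) for t ∈ (n-1, n), n ∈ ℕ. Then y₀ is not square-integrable on (0, ∞): the sum over n of ∫_{n-1}^n |y₀(t)|² dt diverges. -/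
open Real intervalIntegral

lemma Qval (k : ℝ) (hk : k ≠ 0) (α β : ℝ) :
    ∫ s in (0:ℝ)..1, (α * cos (k*s) + β * sin (k*s))^2
      = α^2 * ((cos k * sin k + k)/(2*k)) + 2*α*β*(sin k^2/(2*k))
        + β^2 * ((k - sin k * cos k)/(2*k)) := by
  have hrw : (fun s : ℝ => (α * cos (k*s) + β * sin (k*s))^2)
      = fun s : ℝ => (fun u => α^2 * cos u ^2 + (2*α*β) * (sin u * cos u) + β^2 * sin u ^2) (k*s) := by
    funext s; ring
  have hcomp := intervalIntegral.integral_comp_mul_left (a := 0) (b := 1)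
    (fun u => α^2 * cos u ^2 + (2*α*β) * (sin u * cos u) + β^2 * sin u ^2) hk
  rw [hrw, hcomp]
  have h1 : IntervalIntegrable (fun u : ℝ => α^2 * cos u ^2) MeasureTheory.volume (k*0) (k*1) :=
    (by fun_prop : Continuous fun u : ℝ => α^2 * cos u ^2).intervalIntegrable _ _
  have h2 : IntervalIntegrable (fun u : ℝ => (2*α*β) * (sin u * cos u)) MeasureTheory.volume (k*0) (k*1) :=
    (by fun_prop : Continuous fun u : ℝ => (2*α*β) * (sin u * cos u)).intervalIntegrable _ _
  have h3 : IntervalIntegrable (fun u : ℝ => β^2 * sin u ^2) MeasureTheory.volume (k*0) (k*1) :=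
    (by fun_prop : Continuous fun u : ℝ => β^2 * sin u ^2).intervalIntegrable _ _
  rw [intervalIntegral.integral_add (h1.add h2) h3, intervalIntegral.integral_add h1 h2,
    intervalIntegral.integral_const_mul, intervalIntegral.integral_const_mul,
    intervalIntegral.integral_const_mul, integral_cos_sq, integral_sin_mul_cos₁, integral_sin_sq]
  simp only [mul_zero, mul_one, Real.sin_zero, Real.cos_zero]
  field_simp
  have hk' : k * k⁻¹ = 1 := mul_inv_cancel₀ hk
  linear_combination (α * sin k^2*β*2 + α^2*cos k*sin k - cos k*sin k*β^2 + k*α^2 + k*β^2) * hk'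

lemma abs_sin_lt (k : ℝ) (hk : 0 < k) : |sin k| < k := by
  rcases le_or_gt k 1 with h | h
  · have hsin : 0 < sin k := sin_pos_of_pos_of_lt_pi hk (lt_of_le_of_lt h (by linarith [Real.pi_gt_three]))
    rw [abs_of_pos hsin]; exact Real.sin_lt hk
  · exact lt_of_le_of_lt (abs_le.mpr ⟨neg_one_le_sin k, sin_le_one k⟩) h

lemma Qbound (k : ℝ) (hk : 0 < k) (α β : ℝ) :
    (k - |sin k|)/(2*k) * (α^2+β^2)
      ≤ ∫ s in (0:ℝ)..1, (α * cos (k*s) + β * sin (k*s))^2 := by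
  rw [Qval k hk.ne' α β]
  have hsc := sin_sq_add_cos_sq k
  set X := cos k * (α^2 - β^2) + 2*α*β*sin k with hX
  have hXsq : X^2 ≤ (α^2+β^2)^2 := by
    rw [hX]; nlinarith [sq_nonneg (sin k * (α^2-β^2) - 2*α*β*cos k), hsc]
  have hXabs : |X| ≤ α^2+β^2 := by
    have h0 : (0:ℝ) ≤ α^2+β^2 := by positivity
    have := abs_le_abs (le_refl (α^2+β^2)) (neg_le_self h0)
    nlinarith [abs_nonneg X, sq_abs X, sq_nonneg (|X| - (α^2+β^2)), sq_nonneg (|X| + (α^2+β^2))]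
  have key : -(|sin k| * (α^2+β^2)) ≤ sin k * X := by
    calc -(|sin k| * (α^2+β^2)) ≤ -(|sin k| * |X|) := by
          exact neg_le_neg (mul_le_mul_of_nonneg_left hXabs (abs_nonneg _))
      _ = -|sin k * X| := by rw [abs_mul]
      _ ≤ sin k * X := neg_abs_le _
  rw [hX] at key
  rw [div_mul_eq_mul_div, div_le_iff₀ (by positivity : (0:ℝ) < 2*k)]
  field_simp
  nlinarith [key]

lemma Qbound2 (k : ℝ) (hk : 0 < k) (α β : ℝ) :
    (k - |sin k|)/(2*k) * (1 - |cos k|) * (α^2+β^2)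
      ≤ ∫ s in (0:ℝ)..1, (α * sin (k*(1-s)) + β * sin (k*s))^2 := by
  have hrw : ∀ s : ℝ, α * sin (k*(1-s)) + β * sin (k*s)
      = (α * sin k) * cos (k*s) + (β - α * cos k) * sin (k*s) := by
    intro s
    rw [show k*(1-s) = k - k*s by ring, Real.sin_sub]
    ring
  simp_rw [hrw]
  refine le_trans ?_ (Qbound k hk (α * sin k) (β - α * cos k))
  have h1 : (0:ℝ) ≤ (k - |sin k|)/(2*k) := by
    exact div_nonneg (by linarith [abs_sin_lt k hk]) (by linarith)
  have h2 : (1 - |cos k|) * (α^2+β^2) ≤ (α * sin k)^2 + (β - α * cos k)^2 := by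
    nlinarith [sin_sq_add_cos_sq k, le_abs_self (cos k), neg_abs_le (cos k),
      sq_nonneg (α - β), sq_nonneg (α + β), abs_nonneg (cos k)]
  calc (k - |sin k|)/(2*k) * (1 - |cos k|) * (α^2+β^2)
      = (k - |sin k|)/(2*k) * ((1 - |cos k|) * (α^2+β^2)) := by ring
    _ ≤ (k - |sin k|)/(2*k) * ((α * sin k)^2 + (β - α * cos k)^2) :=
        mul_le_mul_of_nonneg_left h2 h1

lemma cheb (q₁ q₂ : ℂ) (hprod : q₁ * q₂ = 1) (n : ℕ) :
    (q₂^n - q₁^n)^2 + (q₂^(n+1) - q₁^(n+1))^2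
      - (q₁+q₂) * ((q₂^n - q₁^n) * (q₂^(n+1) - q₁^(n+1))) = (q₂ - q₁)^2 := by
  have hp : q₁^n * q₂^n = 1 := by rw [← mul_pow, hprod, one_pow]
  linear_combination (2 - q₁^n*q₁^n - q₂^n*q₂^n) * hprod + (q₁^2 + q₂^2 - 2) * hp

/-- The solution `y₀` of the problem with `y₀(0+) = 0`, given piecewise by
`y₀(t) = √b (q₂^{n-1}-q₁^{n-1})/(q₂-q₁) sin k(n-t) + (q₂^n-q₁^n)/(q₂-q₁) sin k(t-n+1)`
on `(n-1, n)`, is not square-integrable on `(0, ∞)` when `k/π ∉ ℕ`. -/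
theorem stmt9 (b : ℕ) (hb : 2 ≤ b) (R k : ℝ)
    (hR : R = (Real.sqrt b + 1 / Real.sqrt b) / 2)
    (hk : 0 < k) (hkπ : ∀ m : ℕ, k ≠ π * m) (hRk : R * |Real.cos k| ≠ 1)
    (q₁ q₂ : ℂ) (hne : q₁ ≠ q₂)
    (h1 : q₁ ^ 2 - 2 * (R : ℂ) * (Real.cos k : ℂ) * q₁ + 1 = 0)
    (h2 : q₂ ^ 2 - 2 * (R : ℂ) * (Real.cos k : ℂ) * q₂ + 1 = 0)
    (Y : ℕ → ℝ → ℂ)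
    (hY : ∀ n : ℕ, ∀ t : ℝ, Y n t =
      (Real.sqrt b : ℂ) * ((q₂ ^ (n - 1) - q₁ ^ (n - 1)) / (q₂ - q₁))
          * (Real.sin (k * (n - t)) : ℝ)
        + ((q₂ ^ n - q₁ ^ n) / (q₂ - q₁)) * (Real.sin (k * (t - n + 1)) : ℝ)) :
    ¬ Summable (fun n : ℕ => ∫ t in ((n : ℝ))..((n : ℝ) + 1), ‖Y (n + 1) t‖ ^ 2) := by
  -- basic root facts
  have hd : q₂ - q₁ ≠ 0 := sub_ne_zero.mpr hne.symm
  have hsum : q₁ + q₂ = 2 * (R : ℂ) * (Real.cos k : ℂ) := by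
    have h3 : (q₁ - q₂) * ((q₁ + q₂) - 2 * (R : ℂ) * (Real.cos k : ℂ)) = 0 := by
      linear_combination h1 - h2
    rcases mul_eq_zero.mp h3 with h | h
    · exact absurd (sub_eq_zero.mp h) hne
    · exact sub_eq_zero.mp h
  have hprod : q₁ * q₂ = 1 := by linear_combination q₁ * hsum - h1
  set u : ℕ → ℂ := fun n => (q₂^n - q₁^n)/(q₂ - q₁) with hu
  -- sin k ≠ 0 and |cos k| < 1
  have hsin0 : Real.sin k ≠ 0 := by
    intro h0
    rcases Real.sin_eq_zero_iff.mp h0 with ⟨m, hm⟩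
    have hmpos : 0 < m := by
      by_contra hng
      push_neg at hng
      have : (m : ℝ) * π ≤ 0 :=
        mul_nonpos_of_nonpos_of_nonneg (by exact_mod_cast hng) Real.pi_pos.le
      linarith [hm ▸ hk]
    refine hkπ m.toNat ?_
    have hcast : ((m.toNat : ℕ) : ℝ) = (m : ℝ) := by exact_mod_cast Int.toNat_of_nonneg hmpos.le
    rw [← hm, hcast]; ring
  have hcos1 : |Real.cos k| < 1 := by
    rw [← sq_lt_one_iff_abs_lt_one]
    nlinarith [sin_sq_add_cos_sq k, sq_pos_of_ne_zero hsin0]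
  -- positive constants
  set c₀ : ℝ := (k - |Real.sin k|)/(2*k) * (1 - |Real.cos k|) with hc₀
  have hc₀pos : 0 < c₀ := by
    apply mul_pos (div_pos (by linarith [abs_sin_lt k hk]) (by linarith)) (by linarith)
  set M : ℝ := 1 + ‖q₁ + q₂‖ with hM
  have hMpos : (0:ℝ) < M := by positivity
  -- lower bound on ‖u n‖² + ‖u (n+1)‖²
  have hlow : ∀ n : ℕ, 1/M ≤ ‖u n‖^2 + ‖u (n+1)‖^2 := by
    intro n
    have hiden : u n ^2 + u (n+1)^2 - (q₁+q₂) * (u n * u (n+1)) = 1 := by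
      have key := cheb q₁ q₂ hprod n
      calc u n ^2 + u (n+1)^2 - (q₁+q₂) * (u n * u (n+1))
          = ((q₂^n - q₁^n)^2 + (q₂^(n+1) - q₁^(n+1))^2
            - (q₁+q₂) * ((q₂^n - q₁^n) * (q₂^(n+1) - q₁^(n+1)))) / (q₂-q₁)^2 := by
            rw [hu]; field_simp
        _ = (q₂-q₁)^2/(q₂-q₁)^2 := by rw [key]
        _ = 1 := div_self (pow_ne_zero _ hd)
    have h1' : (1:ℝ) ≤ ‖u n‖^2 + ‖u (n+1)‖^2 + ‖q₁+q₂‖ * (‖u n‖ * ‖u (n+1)‖) := by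
      calc (1:ℝ) = ‖u n ^2 + u (n+1)^2 - (q₁+q₂) * (u n * u (n+1))‖ := by rw [hiden]; simp
        _ ≤ ‖u n ^2 + u (n+1)^2‖ + ‖(q₁+q₂) * (u n * u (n+1))‖ := norm_sub_le _ _
        _ ≤ ‖u n ^2‖ + ‖u (n+1)^2‖ + ‖(q₁+q₂) * (u n * u (n+1))‖ := by
            gcongr; exact norm_add_le _ _
        _ = ‖u n‖^2 + ‖u (n+1)‖^2 + ‖q₁+q₂‖ * (‖u n‖ * ‖u (n+1)‖) := by
            rw [norm_pow, norm_pow, norm_mul, norm_mul]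
    rw [div_le_iff₀ hMpos, hM]
    nlinarith [h1', norm_nonneg (q₁+q₂), norm_nonneg (u n), norm_nonneg (u (n+1)),
      sq_nonneg (‖u n‖ - ‖u (n+1)‖), sq_nonneg (‖u n‖ + ‖u (n+1)‖)]
  -- per-term lower bound
  have hterm : ∀ n : ℕ, c₀ * (1/M) ≤ ∫ t in ((n : ℝ))..((n : ℝ) + 1), ‖Y (n + 1) t‖ ^ 2 := by
    intro n
    set A : ℂ := (Real.sqrt b : ℂ) * u n with hA
    set B : ℂ := u (n+1) with hB
    have hshift : (∫ t in ((n : ℝ))..((n : ℝ) + 1), ‖Y (n + 1) t‖ ^ 2)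
        = ∫ s in (0:ℝ)..1, ‖Y (n+1) (s + n)‖^2 := by
      rw [intervalIntegral.integral_comp_add_right (fun t => ‖Y (n+1) t‖^2) (n:ℝ)]
      norm_num [add_comm]
    have hpt : ∀ s : ℝ, ‖Y (n+1) (s + n)‖^2
        = (A.re * Real.sin (k*(1-s)) + B.re * Real.sin (k*s))^2
          + (A.im * Real.sin (k*(1-s)) + B.im * Real.sin (k*s))^2 := by
      intro s
      have hYv : Y (n+1) (s+n) = A * (Real.sin (k*(1-s)) : ℝ) + B * (Real.sin (k*s) : ℝ) := by
        rw [hY]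
        simp only [Nat.add_sub_cancel]
        rw [show k * (((n+1 : ℕ) : ℝ) - (s+n)) = k * (1-s) by push_cast; ring,
          show k * ((s+n) - ((n+1 : ℕ) : ℝ) + 1) = k * s by push_cast; ring]
      rw [hYv, Complex.sq_norm, Complex.normSq_apply]
      simp only [Complex.add_re, Complex.add_im, Complex.mul_re, Complex.mul_im,
        Complex.ofReal_re, Complex.ofReal_im]
      ring
    rw [hshift]
    rw [intervalIntegral.integral_congr (g :=
      fun s => (A.re * Real.sin (k*(1-s)) + B.re * Real.sin (k*s))^2
        + (A.im * Real.sin (k*(1-s)) + B.im * Real.sin (k*s))^2) (fun s _ => hpt s)]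
    have hint1 : IntervalIntegrable
        (fun s : ℝ => (A.re * Real.sin (k*(1-s)) + B.re * Real.sin (k*s))^2)
        MeasureTheory.volume 0 1 :=
      (by fun_prop : Continuous fun s : ℝ =>
        (A.re * Real.sin (k*(1-s)) + B.re * Real.sin (k*s))^2).intervalIntegrable _ _
    have hint2 : IntervalIntegrable
        (fun s : ℝ => (A.im * Real.sin (k*(1-s)) + B.im * Real.sin (k*s))^2)
        MeasureTheory.volume 0 1 :=
      (by fun_prop : Continuous fun s : ℝ =>
        (A.im * Real.sin (k*(1-s)) + B.im * Real.sin (k*s))^2).intervalIntegrable _ _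
    rw [intervalIntegral.integral_add hint1 hint2]
    have hb1 := Qbound2 k hk A.re B.re
    have hb2 := Qbound2 k hk A.im B.im
    have hAB : ‖u n‖^2 + ‖u (n+1)‖^2 ≤ (A.re^2 + B.re^2) + (A.im^2 + B.im^2) := by
      have hA2 : A.re^2 + A.im^2 = ‖A‖^2 := by
        rw [Complex.sq_norm, Complex.normSq_apply]; ring
      have hB2 : B.re^2 + B.im^2 = ‖B‖^2 := by
        rw [Complex.sq_norm, Complex.normSq_apply]; ring
      have hnA : ‖A‖ = Real.sqrt b * ‖u n‖ := by
        rw [hA, norm_mul, Complex.norm_real, Real.norm_eq_abs,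
          abs_of_nonneg (Real.sqrt_nonneg _)]
      have hsb : (1:ℝ) ≤ Real.sqrt b := by
        rw [show (1:ℝ) = Real.sqrt 1 by simp]
        exact Real.sqrt_le_sqrt (by exact_mod_cast le_trans one_le_two hb)
      have h1b : (1:ℝ) ≤ Real.sqrt b ^ 2 := by
        simpa using pow_le_pow_left₀ zero_le_one hsb 2
      have hAn : ‖u n‖^2 ≤ ‖A‖^2 := by
        rw [hnA, mul_pow]
        exact le_mul_of_one_le_left (sq_nonneg _) h1b
      have hBn : ‖u (n+1)‖^2 ≤ ‖B‖^2 := by rw [hB]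
      linarith only [hAn, hA2, hB2, hBn]
    calc c₀ * (1/M) ≤ c₀ * (‖u n‖^2 + ‖u (n+1)‖^2) :=
          mul_le_mul_of_nonneg_left (hlow n) hc₀pos.le
      _ ≤ c₀ * ((A.re^2 + B.re^2) + (A.im^2 + B.im^2)) :=
          mul_le_mul_of_nonneg_left hAB hc₀pos.le
      _ = (k - |Real.sin k|)/(2*k) * (1 - |Real.cos k|) * (A.re^2 + B.re^2)
          + (k - |Real.sin k|)/(2*k) * (1 - |Real.cos k|) * (A.im^2 + B.im^2) := by
          rw [hc₀]; ring
      _ ≤ _ := add_le_add hb1 hb2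
  -- conclude
  intro hS
  have htend := hS.tendsto_atTop_zero
  have hev := htend.eventually_lt_const (mul_pos hc₀pos (by positivity : (0:ℝ) < 1/M))
  rcases hev.exists with ⟨n, hn⟩
  exact absurd (hterm n) (not_le.mpr hn)
end

section
/- Suppose |V| : ℝ₊ → ℝ₊ is nonincreasing. Then J(V)/√6 ≤ ∫₀^∞ |V(t)|^{1/2} dt ≤ √6 · J(V), where J(V) = Σ_{n ∈ ℤ} (∫_{2^{n-1}}^{2^n} t|V(t)| dt)^{1/2}. -/
open MeasureTheory ENNReal

lemma lintId {a b : ℝ} (ha : 0 ≤ a) (hab : a ≤ b) :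
    ∫⁻ t in Set.Ioc a b, ENNReal.ofReal t = ENNReal.ofReal ((b ^ 2 - a ^ 2) / 2) := by
  rw [← ofReal_integral_eq_lintegral_ofReal]
  · congr 1
    rw [← intervalIntegral.integral_of_le hab, integral_id]
  · exact continuous_id.integrableOn_Ioc
  · filter_upwards [ae_restrict_mem measurableSet_Ioc] with t ht
    exact ha.trans ht.1.le

lemma lintA_le (V : ℝ → ℝ) (hmono : AntitoneOn (fun t => |V t|) (Set.Ioi 0))
    {a b : ℝ} (ha : 0 < a) (hab : a ≤ b) :
    ∫⁻ t in Set.Ioc a b, ENNReal.ofReal (t * |V t|)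
      ≤ ENNReal.ofReal (|V a| * ((b ^ 2 - a ^ 2) / 2)) := by
  calc ∫⁻ t in Set.Ioc a b, ENNReal.ofReal (t * |V t|)
      ≤ ∫⁻ t in Set.Ioc a b, ENNReal.ofReal t * ENNReal.ofReal |V a| := by
        refine setLIntegral_mono' measurableSet_Ioc fun t ht => ?_
        rw [← ENNReal.ofReal_mul (ha.le.trans ht.1.le)]
        exact ENNReal.ofReal_le_ofReal (mul_le_mul_of_nonneg_left
          (hmono ha (ha.trans ht.1) ht.1.le) (ha.le.trans ht.1.le))
    _ = (∫⁻ t in Set.Ioc a b, ENNReal.ofReal t) * ENNReal.ofReal |V a| :=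
        lintegral_mul_const _ ENNReal.measurable_ofReal
    _ = ENNReal.ofReal (|V a| * ((b ^ 2 - a ^ 2) / 2)) := by
        rw [lintId ha.le hab, ← ENNReal.ofReal_mul (by nlinarith : (0:ℝ) ≤ (b ^ 2 - a ^ 2) / 2), mul_comm]

lemma lintA_ge (V : ℝ → ℝ) (hmono : AntitoneOn (fun t => |V t|) (Set.Ioi 0))
    {a b : ℝ} (ha : 0 < a) (hab : a ≤ b) :
    ENNReal.ofReal (|V b| * ((b ^ 2 - a ^ 2) / 2))
      ≤ ∫⁻ t in Set.Ioc a b, ENNReal.ofReal (t * |V t|) := by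
  calc ENNReal.ofReal (|V b| * ((b ^ 2 - a ^ 2) / 2))
      = (∫⁻ t in Set.Ioc a b, ENNReal.ofReal t) * ENNReal.ofReal |V b| := by
        rw [lintId ha.le hab, ← ENNReal.ofReal_mul (by nlinarith : (0:ℝ) ≤ (b ^ 2 - a ^ 2) / 2), mul_comm]
    _ = ∫⁻ t in Set.Ioc a b, ENNReal.ofReal t * ENNReal.ofReal |V b| :=
        (lintegral_mul_const _ ENNReal.measurable_ofReal).symm
    _ ≤ ∫⁻ t in Set.Ioc a b, ENNReal.ofReal (t * |V t|) := by
        refine setLIntegral_mono' measurableSet_Ioc fun t ht => ?_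
        rw [← ENNReal.ofReal_mul (ha.le.trans ht.1.le)]
        exact ENNReal.ofReal_le_ofReal (mul_le_mul_of_nonneg_left
          (hmono (ha.trans ht.1) (ha.trans_le hab) ht.2) (ha.le.trans ht.1.le))

lemma lintB_le (V : ℝ → ℝ) (hmono : AntitoneOn (fun t => |V t|) (Set.Ioi 0))
    {a b : ℝ} (ha : 0 < a) (hab : a ≤ b) :
    ∫⁻ t in Set.Ioc a b, ENNReal.ofReal (|V t| ^ ((1:ℝ)/2))
      ≤ ENNReal.ofReal (|V a| ^ ((1:ℝ)/2) * (b - a)) := by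
  calc ∫⁻ t in Set.Ioc a b, ENNReal.ofReal (|V t| ^ ((1:ℝ)/2))
      ≤ ∫⁻ _ in Set.Ioc a b, ENNReal.ofReal (|V a| ^ ((1:ℝ)/2)) := by
        refine setLIntegral_mono' measurableSet_Ioc fun t ht => ?_
        exact ENNReal.ofReal_le_ofReal (Real.rpow_le_rpow (abs_nonneg _)
          (hmono ha (ha.trans ht.1) ht.1.le) (by norm_num))
    _ = ENNReal.ofReal (|V a| ^ ((1:ℝ)/2)) * volume (Set.Ioc a b) :=
        setLIntegral_const _ _
    _ = ENNReal.ofReal (|V a| ^ ((1:ℝ)/2) * (b - a)) := by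
        rw [Real.volume_Ioc, ← ENNReal.ofReal_mul (Real.rpow_nonneg (abs_nonneg _) _)]

lemma lintB_ge (V : ℝ → ℝ) (hmono : AntitoneOn (fun t => |V t|) (Set.Ioi 0))
    {a b : ℝ} (ha : 0 < a) (hab : a ≤ b) :
    ENNReal.ofReal (|V b| ^ ((1:ℝ)/2) * (b - a))
      ≤ ∫⁻ t in Set.Ioc a b, ENNReal.ofReal (|V t| ^ ((1:ℝ)/2)) := by
  calc ENNReal.ofReal (|V b| ^ ((1:ℝ)/2) * (b - a))
      = ∫⁻ _ in Set.Ioc a b, ENNReal.ofReal (|V b| ^ ((1:ℝ)/2)) := by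
        rw [setLIntegral_const, Real.volume_Ioc,
          ← ENNReal.ofReal_mul (Real.rpow_nonneg (abs_nonneg _) _)]
    _ ≤ ∫⁻ t in Set.Ioc a b, ENNReal.ofReal (|V t| ^ ((1:ℝ)/2)) := by
        refine setLIntegral_mono' measurableSet_Ioc fun t ht => ?_
        exact ENNReal.ofReal_le_ofReal (Real.rpow_le_rpow (abs_nonneg _)
          (hmono (ha.trans ht.1) (ha.trans_le hab) ht.2) (by norm_num))

lemma step1 (V : ℝ → ℝ) (hmono : AntitoneOn (fun t => |V t|) (Set.Ioi 0)) (n : ℤ) :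
    (∫⁻ t in Set.Ioc ((2:ℝ) ^ (n - 1)) ((2:ℝ) ^ n),
        ENNReal.ofReal (t * |V t|)) ^ ((1:ℝ)/2)
      ≤ ENNReal.ofReal (Real.sqrt 6) *
        ∫⁻ t in Set.Ioc ((2:ℝ) ^ (n - 1 - 1)) ((2:ℝ) ^ (n - 1)),
          ENNReal.ofReal (|V t| ^ ((1:ℝ)/2)) := by
  have ha : (0:ℝ) < (2:ℝ) ^ (n - 1) := zpow_pos two_pos _
  have hb : (2:ℝ) ^ n = 2 * (2:ℝ) ^ (n - 1) := by
    rw [zpow_sub_one₀ (two_ne_zero : (2:ℝ) ≠ 0)]; field_simp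
  have hc : (2:ℝ) ^ (n - 1 - 1) = (2:ℝ) ^ (n - 1) / 2 := by
    rw [zpow_sub_one₀ (two_ne_zero : (2:ℝ) ≠ 0) (n - 1)]; ring
  set a := (2:ℝ) ^ (n - 1) with ha_def
  rw [hb, hc]
  have key : (0:ℝ) ≤ ((2*a) ^ 2 - a ^ 2) / 2 := by nlinarith [sq_nonneg a]
  calc (∫⁻ t in Set.Ioc a (2 * a), ENNReal.ofReal (t * |V t|)) ^ ((1:ℝ)/2)
      ≤ (ENNReal.ofReal (|V a| * (((2*a) ^ 2 - a ^ 2) / 2))) ^ ((1:ℝ)/2) :=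
        ENNReal.rpow_le_rpow (lintA_le V hmono ha (by linarith)) (by norm_num)
    _ = ENNReal.ofReal ((|V a| * (((2*a) ^ 2 - a ^ 2) / 2)) ^ ((1:ℝ)/2)) :=
        ENNReal.ofReal_rpow_of_nonneg (mul_nonneg (abs_nonneg _) key) (by norm_num)
    _ ≤ ENNReal.ofReal (Real.sqrt 6 * (|V a| ^ ((1:ℝ)/2) * (a - a/2))) := by
        apply ENNReal.ofReal_le_ofReal
        rw [Real.mul_rpow (abs_nonneg _) key, ← Real.sqrt_eq_rpow (((2*a) ^ 2 - a ^ 2) / 2),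
          show ((2*a) ^ 2 - a ^ 2) / 2 = 6 * (a - a/2) ^ 2 by ring,
          Real.sqrt_mul (by norm_num : (0:ℝ) ≤ 6), Real.sqrt_sq (by linarith : (0:ℝ) ≤ a - a/2)]
        ring_nf
        exact le_refl _
    _ = ENNReal.ofReal (Real.sqrt 6) * ENNReal.ofReal (|V a| ^ ((1:ℝ)/2) * (a - a/2)) :=
        ENNReal.ofReal_mul (Real.sqrt_nonneg _)
    _ ≤ ENNReal.ofReal (Real.sqrt 6) *
        ∫⁻ t in Set.Ioc (a/2) a, ENNReal.ofReal (|V t| ^ ((1:ℝ)/2)) :=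
        mul_le_mul_right (lintB_ge V hmono (by linarith) (by linarith)) _

lemma step2 (V : ℝ → ℝ) (hmono : AntitoneOn (fun t => |V t|) (Set.Ioi 0)) (n : ℤ) :
    (∫⁻ t in Set.Ioc ((2:ℝ) ^ (n - 1)) ((2:ℝ) ^ n),
        ENNReal.ofReal (|V t| ^ ((1:ℝ)/2)))
      ≤ ENNReal.ofReal (Real.sqrt 6) *
        (∫⁻ t in Set.Ioc ((2:ℝ) ^ (n - 1 - 1)) ((2:ℝ) ^ (n - 1)),
          ENNReal.ofReal (t * |V t|)) ^ ((1:ℝ)/2) := by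
  have ha : (0:ℝ) < (2:ℝ) ^ (n - 1) := zpow_pos two_pos _
  have hb : (2:ℝ) ^ n = 2 * (2:ℝ) ^ (n - 1) := by
    rw [zpow_sub_one₀ (two_ne_zero : (2:ℝ) ≠ 0)]; field_simp
  have hc : (2:ℝ) ^ (n - 1 - 1) = (2:ℝ) ^ (n - 1) / 2 := by
    rw [zpow_sub_one₀ (two_ne_zero : (2:ℝ) ≠ 0) (n - 1)]; ring
  set a := (2:ℝ) ^ (n - 1) with ha_def
  rw [hb, hc]
  have key : (0:ℝ) ≤ (a ^ 2 - (a/2) ^ 2) / 2 := by nlinarith [sq_nonneg a]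
  calc (∫⁻ t in Set.Ioc a (2 * a), ENNReal.ofReal (|V t| ^ ((1:ℝ)/2)))
      ≤ ENNReal.ofReal (|V a| ^ ((1:ℝ)/2) * (2*a - a)) :=
        lintB_le V hmono ha (by linarith)
    _ ≤ ENNReal.ofReal (Real.sqrt 6 * (|V a| * ((a ^ 2 - (a/2) ^ 2) / 2)) ^ ((1:ℝ)/2)) := by
        apply ENNReal.ofReal_le_ofReal
        rw [Real.mul_rpow (abs_nonneg _) key, ← Real.sqrt_eq_rpow ((a ^ 2 - (a/2) ^ 2) / 2),
          show (a ^ 2 - (a/2) ^ 2) / 2 = 6 * (a/4) ^ 2 by ring,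
          Real.sqrt_mul (by norm_num : (0:ℝ) ≤ 6), Real.sqrt_sq (by linarith : (0:ℝ) ≤ a/4)]
        have h6 : Real.sqrt 6 * Real.sqrt 6 = 6 := Real.mul_self_sqrt (by norm_num)
        have hV : (0:ℝ) ≤ |V a| ^ ((1:ℝ)/2) := Real.rpow_nonneg (abs_nonneg _) _
        nlinarith [mul_nonneg hV ha.le]
    _ = ENNReal.ofReal (Real.sqrt 6) *
        ENNReal.ofReal ((|V a| * ((a ^ 2 - (a/2) ^ 2) / 2)) ^ ((1:ℝ)/2)) :=
        ENNReal.ofReal_mul (Real.sqrt_nonneg _)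
    _ ≤ ENNReal.ofReal (Real.sqrt 6) *
        (∫⁻ t in Set.Ioc (a/2) a, ENNReal.ofReal (t * |V t|)) ^ ((1:ℝ)/2) := by
        apply mul_le_mul_right
        rw [← ENNReal.ofReal_rpow_of_nonneg (mul_nonneg (abs_nonneg _) key) (by norm_num)]
        exact ENNReal.rpow_le_rpow (lintA_ge V hmono (by linarith) (by linarith)) (by norm_num)


/-- For `|V|` nonincreasing on `(0,∞)`:
`J(V)/√6 ≤ ∫₀^∞ |V|^{1/2} ≤ √6 J(V)`, where
`J(V) = Σ_{n ∈ ℤ} (∫_{2^{n-1}}^{2^n} t|V(t)| dt)^{1/2}` (values in `[0,∞]`). -/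
theorem stmt11 (V : ℝ → ℝ)
    (hmono : AntitoneOn (fun t => |V t|) (Set.Ioi 0))
    (J I : ℝ≥0∞)
    (hJ : J = ∑' n : ℤ, (∫⁻ t in Set.Ioc ((2:ℝ) ^ (n - 1)) ((2:ℝ) ^ n),
      ENNReal.ofReal (t * |V t|)) ^ ((1:ℝ)/2))
    (hI : I = ∫⁻ t in Set.Ioi (0:ℝ), ENNReal.ofReal (|V t| ^ ((1:ℝ)/2))) :
    J / ENNReal.ofReal (Real.sqrt 6) ≤ I ∧ I ≤ ENNReal.ofReal (Real.sqrt 6) * J := by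
  have hunion : Set.Ioi (0:ℝ) = ⋃ n : ℤ, Set.Ioc ((2:ℝ) ^ (n - 1)) ((2:ℝ) ^ n) := by
    ext x
    simp only [Set.mem_iUnion, Set.mem_Ioc, Set.mem_Ioi]
    constructor
    · intro hx
      obtain ⟨n, hn⟩ := exists_mem_Ioc_zpow hx (one_lt_two : (1:ℝ) < 2)
      exact ⟨n + 1, by rw [add_sub_cancel_right]; exact hn.1, hn.2⟩
    · rintro ⟨n, h1, -⟩
      exact lt_trans (zpow_pos two_pos _) h1
  have hdisj : Pairwise (Function.onFun Disjoint
      fun n : ℤ => Set.Ioc ((2:ℝ) ^ (n - 1)) ((2:ℝ) ^ n)) := by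
    intro m k hmk
    rw [Function.onFun, Set.Ioc_disjoint_Ioc]
    rcases hmk.lt_or_gt with h | h
    · exact le_trans (min_le_left _ _)
        (le_trans (zpow_le_zpow_right₀ one_le_two (by omega)) (le_max_right _ _))
    · exact le_trans (min_le_right _ _)
        (le_trans (zpow_le_zpow_right₀ one_le_two (by omega)) (le_max_left _ _))
  have hI' : I = ∑' n : ℤ, ∫⁻ t in Set.Ioc ((2:ℝ) ^ (n - 1)) ((2:ℝ) ^ n),
      ENNReal.ofReal (|V t| ^ ((1:ℝ)/2)) := by
    rw [hI, hunion, lintegral_iUnion (fun n => measurableSet_Ioc) hdisj]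
  have hshiftA := (Equiv.subRight (1:ℤ)).tsum_eq
    (fun k => (∫⁻ t in Set.Ioc ((2:ℝ) ^ (k - 1)) ((2:ℝ) ^ k),
      ENNReal.ofReal (t * |V t|)) ^ ((1:ℝ)/2))
  have hshiftB := (Equiv.subRight (1:ℤ)).tsum_eq
    (fun k => ∫⁻ t in Set.Ioc ((2:ℝ) ^ (k - 1)) ((2:ℝ) ^ k),
      ENNReal.ofReal (|V t| ^ ((1:ℝ)/2)))
  simp only [Equiv.subRight_apply] at hshiftA hshiftB
  constructor
  · apply ENNReal.div_le_of_le_mul'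
    rw [hJ, hI']
    calc ∑' n : ℤ, (∫⁻ t in Set.Ioc ((2:ℝ) ^ (n - 1)) ((2:ℝ) ^ n),
          ENNReal.ofReal (t * |V t|)) ^ ((1:ℝ)/2)
        ≤ ∑' n : ℤ, ENNReal.ofReal (Real.sqrt 6) *
          ∫⁻ t in Set.Ioc ((2:ℝ) ^ (n - 1 - 1)) ((2:ℝ) ^ (n - 1)),
            ENNReal.ofReal (|V t| ^ ((1:ℝ)/2)) :=
          ENNReal.tsum_le_tsum (fun n => step1 V hmono n)
      _ = ENNReal.ofReal (Real.sqrt 6) * ∑' n : ℤ,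
          ∫⁻ t in Set.Ioc ((2:ℝ) ^ (n - 1 - 1)) ((2:ℝ) ^ (n - 1)),
            ENNReal.ofReal (|V t| ^ ((1:ℝ)/2)) := ENNReal.tsum_mul_left
      _ = ENNReal.ofReal (Real.sqrt 6) * ∑' n : ℤ,
          ∫⁻ t in Set.Ioc ((2:ℝ) ^ (n - 1)) ((2:ℝ) ^ n),
            ENNReal.ofReal (|V t| ^ ((1:ℝ)/2)) := by rw [hshiftB]
  · rw [hJ, hI']
    calc ∑' n : ℤ, ∫⁻ t in Set.Ioc ((2:ℝ) ^ (n - 1)) ((2:ℝ) ^ n),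
          ENNReal.ofReal (|V t| ^ ((1:ℝ)/2))
        ≤ ∑' n : ℤ, ENNReal.ofReal (Real.sqrt 6) *
          (∫⁻ t in Set.Ioc ((2:ℝ) ^ (n - 1 - 1)) ((2:ℝ) ^ (n - 1)),
            ENNReal.ofReal (t * |V t|)) ^ ((1:ℝ)/2) :=
          ENNReal.tsum_le_tsum (fun n => step2 V hmono n)
      _ = ENNReal.ofReal (Real.sqrt 6) * ∑' n : ℤ,
          (∫⁻ t in Set.Ioc ((2:ℝ) ^ (n - 1 - 1)) ((2:ℝ) ^ (n - 1)),
            ENNReal.ofReal (t * |V t|)) ^ ((1:ℝ)/2) := ENNReal.tsum_mul_left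
      _ = ENNReal.ofReal (Real.sqrt 6) * ∑' n : ℤ,
          (∫⁻ t in Set.Ioc ((2:ℝ) ^ (n - 1)) ((2:ℝ) ^ n),
            ENNReal.ofReal (t * |V t|)) ^ ((1:ℝ)/2) := by rw [hshiftA]
end

section
/- Let ρ : ℝ → ℝ be bounded with |ρ| ≤ M and 1/2-Hölder continuous with constant C₀, and let γ > 1. Then F₊(σ, λ) = ∫₀^∞ [ρ(λ) - ρ(λ - (s+σ)^{-2γ})] ds satisfies |F₊(σ, λ)| ≤ C(1 + σ)^{1-γ} for all σ > 0, with C depending only on M, C₀, γ. -/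
open MeasureTheory Set

lemma holder_cont {ρ : ℝ → ℝ} {C₀ : ℝ}
    (h : ∀ μ ν : ℝ, |ρ ν - ρ μ| ≤ C₀ * |ν - μ| ^ ((1:ℝ)/2)) : Continuous ρ := by
  have hC₀ : 0 ≤ C₀ := by
    have := h 0 1
    simp at this
    linarith [abs_nonneg (ρ 1 - ρ 0)]
  rw [Metric.continuous_iff]
  intro b ε hε
  refine ⟨(ε / (C₀ + 1)) ^ (2:ℝ), by positivity, fun a ha => ?_⟩
  have h1 : |a - b| ^ ((1:ℝ)/2) ≤ ((ε/(C₀+1)) ^ (2:ℝ)) ^ ((1:ℝ)/2) :=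
    Real.rpow_le_rpow (abs_nonneg _) (by simpa [Real.dist_eq] using ha.le) (by norm_num)
  have h2 : ((ε/(C₀+1)) ^ (2:ℝ)) ^ ((1:ℝ)/2) = ε/(C₀+1) := by
    rw [← Real.rpow_mul (by positivity)]
    norm_num
  rw [h2] at h1
  have := h b a
  rw [Real.dist_eq]
  calc |ρ a - ρ b| ≤ C₀ * |a - b| ^ ((1:ℝ)/2) := this
    _ ≤ C₀ * (ε/(C₀+1)) := by nlinarith
    _ < ε := by rw [mul_div_assoc']; rw [div_lt_iff₀ (by positivity)]; nlinarith

-- shift lemma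
lemma shift_int {γ σ : ℝ} (hσ : 0 < σ) (hγ : 1 < γ) :
    IntegrableOn (fun s : ℝ => (s + σ) ^ (-γ)) (Ioi 0) ∧
    ∫ s in Ioi (0:ℝ), (s + σ) ^ (-γ) = σ ^ (1 - γ) / (γ - 1) := by
  have hmp : MeasurePreserving (fun x : ℝ => x + σ) volume volume :=
    measurePreserving_add_right volume σ
  have hemb : MeasurableEmbedding (fun x : ℝ => x + σ) :=
    (Homeomorph.addRight σ).measurableEmbedding
  have hpre : (fun x : ℝ => x + σ) ⁻¹' (Ioi σ) = Ioi 0 := by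
    ext x; simp [Set.mem_preimage]
  have hint : IntegrableOn (fun t : ℝ => t ^ (-γ)) (Ioi σ) :=
    integrableOn_Ioi_rpow_of_lt (by linarith) hσ
  constructor
  · have := (hmp.restrict_preimage_emb hemb (Ioi σ)).integrable_comp_emb hemb (g := fun t : ℝ => t ^ (-γ))
    rw [hpre] at this
    exact this.2 hint
  · have := hmp.setIntegral_preimage_emb hemb (fun t : ℝ => t ^ (-γ)) (Ioi σ)
    rw [hpre] at this
    rw [this, integral_Ioi_rpow_of_lt (by linarith) hσ, show -γ + 1 = 1 - γ by ring]
    rw [neg_div, neg_eq_iff_eq_neg, ← neg_div, div_eq_div_iff (by linarith : (1:ℝ) - γ ≠ 0) (by linarith : γ - 1 ≠ 0)]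
    ring


/-- If `ρ` is bounded by `M` and `1/2`-Hölder with constant `C₀`, and `γ > 1`, then
`F₊(σ, λ) = ∫₀^∞ [ρ(λ) - ρ(λ - (s+σ)^{-2γ})] ds` satisfies
`|F₊(σ, λ)| ≤ C(1+σ)^{1-γ}` with `C` depending only on `M, C₀, γ`. -/
theorem stmt13 (M C₀ γ : ℝ) (hM : 0 ≤ M) (hC₀ : 0 ≤ C₀) (hγ : 1 < γ) :
    ∃ C > 0, ∀ ρ : ℝ → ℝ,
      (∀ x : ℝ, |ρ x| ≤ M) →
      (∀ μ ν : ℝ, |ρ ν - ρ μ| ≤ C₀ * |ν - μ| ^ ((1:ℝ)/2)) →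
      ∀ lam σ : ℝ, 0 < σ →
        IntegrableOn (fun s => ρ lam - ρ (lam - (s + σ) ^ (-(2 * γ)))) (Set.Ioi 0) ∧
        |∫ s in Set.Ioi (0:ℝ), (ρ lam - ρ (lam - (s + σ) ^ (-(2 * γ))))|
          ≤ C * (1 + σ) ^ (1 - γ) := by
  have h2pos : (0:ℝ) < (2:ℝ) ^ (γ - 1) := Real.rpow_pos_of_pos two_pos _
  have hγ1 : (0:ℝ) < γ - 1 := by linarith
  refine ⟨(2:ℝ) ^ (γ - 1) * (2*M + C₀/(γ-1) + 1), by positivity, ?_⟩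
  intro ρ hb hh lam σ hσ
  set f : ℝ → ℝ := fun s => ρ lam - ρ (lam - (s + σ) ^ (-(2 * γ))) with hf
  have hsp : ∀ s : ℝ, s ∈ Ioi (0:ℝ) → 0 < s + σ := fun s hs => by
    have : (0:ℝ) < s := hs; linarith
  -- measurability
  have hρc : Continuous ρ := holder_cont hh
  have hcont : ContinuousOn f (Ioi 0) := by
    apply continuousOn_const.sub
    apply hρc.comp_continuousOn
    apply continuousOn_const.sub
    apply ContinuousOn.rpow_const (by fun_prop)
    exact fun x hx => Or.inl (ne_of_gt (hsp x hx))
  have hmeas : AEStronglyMeasurable f (volume.restrict (Ioi 0)) :=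
    hcont.aestronglyMeasurable measurableSet_Ioi
  -- pointwise bounds
  have hbound2M : ∀ s : ℝ, |f s| ≤ 2 * M := by
    intro s
    have h1 := abs_le.1 (hb lam)
    have h2 := abs_le.1 (hb (lam - (s + σ) ^ (-(2 * γ))))
    rw [abs_le]; constructor <;> simp only [hf] <;> nlinarith
  have hboundH : ∀ s : ℝ, s ∈ Ioi (0:ℝ) → |f s| ≤ C₀ * (s + σ) ^ (-γ) := by
    intro s hs
    have hp := hsp s hs
    have := hh (lam - (s + σ) ^ (-(2 * γ))) lam
    have he : |lam - (lam - (s + σ) ^ (-(2 * γ)))| = (s + σ) ^ (-(2 * γ)) := by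
      rw [sub_sub_cancel, abs_of_nonneg (Real.rpow_nonneg hp.le _)]
    rw [he] at this
    have he2 : ((s + σ) ^ (-(2 * γ))) ^ ((1:ℝ)/2) = (s + σ) ^ (-γ) := by
      rw [← Real.rpow_mul hp.le, show (-(2 * γ)) * ((1:ℝ)/2) = -γ by ring]
    rw [he2] at this
    exact this
  -- dominating function
  set g0 : ℝ → ℝ := fun s => if s ≤ 1 then 2*M else C₀ * s ^ (-γ) with hg0
  have hIoi : Ioc (0:ℝ) 1 ∪ Ioi 1 = Ioi 0 := Ioc_union_Ioi_eq_Ioi zero_le_one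
  have hg1 : IntegrableOn g0 (Ioc (0:ℝ) 1) := by
    refine ((integrableOn_const (μ := volume) (C := 2*M) measure_Ioc_lt_top.ne)).congr_fun
      (fun x hx => ?_) measurableSet_Ioc
    exact (if_pos hx.2).symm
  have hg2 : IntegrableOn g0 (Ioi (1:ℝ)) := by
    refine IntegrableOn.congr_fun
      (f := fun s : ℝ => C₀ * s ^ (-γ))
      ((integrableOn_Ioi_rpow_of_lt (by linarith : -γ < -1) one_pos).const_mul C₀)
      (fun x hx => (if_neg (not_le.2 hx)).symm) measurableSet_Ioi
  have hg0int : IntegrableOn g0 (Ioi (0:ℝ)) := by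
    rw [← hIoi]; exact hg1.union hg2
  have hae : ∀ᵐ s ∂volume.restrict (Ioi (0:ℝ)), ‖f s‖ ≤ g0 s := by
    rw [ae_restrict_iff' measurableSet_Ioi]
    filter_upwards with s hs
    rw [Real.norm_eq_abs]
    by_cases h1 : s ≤ 1
    · rw [hg0]; simp only [if_pos h1]; exact hbound2M s
    · rw [hg0]; simp only [if_neg h1]
      refine (hboundH s hs).trans (mul_le_mul_of_nonneg_left ?_ hC₀)
      exact Real.rpow_le_rpow_of_nonpos hs (by linarith) (by linarith)
  have hfint : IntegrableOn f (Ioi (0:ℝ)) := hg0int.mono' hmeas hae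
  refine ⟨hfint, ?_⟩
  rw [← Real.norm_eq_abs]
  rcases le_total σ 1 with hσ1 | hσ1
  · -- small σ
    have h1 : ‖∫ s in Ioi (0:ℝ), f s‖ ≤ ∫ s in Ioi (0:ℝ), g0 s :=
      norm_integral_le_of_norm_le hg0int hae
    have hval : ∫ s in Ioi (0:ℝ), g0 s = 2*M + C₀ * (1/(γ-1)) := by
      rw [← hIoi, setIntegral_union (Ioc_disjoint_Ioi le_rfl) measurableSet_Ioi hg1 hg2]
      have e1 : ∫ s in Ioc (0:ℝ) 1, g0 s = 2*M := by
        rw [setIntegral_congr_fun measurableSet_Ioc (g := fun _ => 2*M)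
          (fun x hx => if_pos hx.2)]
        simp [Real.volume_Ioc]
      have e2 : ∫ s in Ioi (1:ℝ), g0 s = C₀ * (1/(γ-1)) := by
        rw [setIntegral_congr_fun measurableSet_Ioi (g := fun s => C₀ * s ^ (-γ))
          (fun x hx => if_neg (not_le.2 hx))]
        rw [integral_const_mul, integral_Ioi_rpow_of_lt (by linarith) one_pos]
        rw [Real.one_rpow]
        congr 1
        rw [neg_div, neg_eq_iff_eq_neg, ← neg_div, div_eq_div_iff (by linarith) (by linarith)]
        ring
      rw [e1, e2]
    have h2 : (2:ℝ) ^ (1-γ) ≤ (1+σ) ^ (1-γ) :=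
      Real.rpow_le_rpow_of_nonpos (by linarith) (by linarith) (by linarith)
    have h3 : (2:ℝ) ^ (γ-1) * (2:ℝ) ^ (1-γ) = 1 := by
      rw [← Real.rpow_add two_pos]; norm_num
    calc ‖∫ s in Ioi (0:ℝ), f s‖ ≤ 2*M + C₀ * (1/(γ-1)) := by rw [← hval]; exact h1
      _ = (2*M + C₀/(γ-1)) * ((2:ℝ)^(γ-1) * (2:ℝ)^(1-γ)) := by rw [h3]; ring
      _ ≤ ((2:ℝ)^(γ-1) * (2*M + C₀/(γ-1) + 1)) * ((2:ℝ)^(1-γ)) := by nlinarith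
      _ ≤ ((2:ℝ)^(γ-1) * (2*M + C₀/(γ-1) + 1)) * (1+σ)^(1-γ) := by
          refine mul_le_mul_of_nonneg_left h2 ?_
          positivity
  · -- large σ
    obtain ⟨hint2, hval2⟩ := shift_int hσ hγ
    have hae2 : ∀ᵐ s ∂volume.restrict (Ioi (0:ℝ)), ‖f s‖ ≤ C₀ * (s + σ) ^ (-γ) := by
      rw [ae_restrict_iff' measurableSet_Ioi]
      filter_upwards with s hs
      rw [Real.norm_eq_abs]; exact hboundH s hs
    have h1 : ‖∫ s in Ioi (0:ℝ), f s‖ ≤ ∫ s in Ioi (0:ℝ), C₀ * (s + σ) ^ (-γ) :=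
      norm_integral_le_of_norm_le (hint2.const_mul C₀) hae2
    rw [integral_const_mul, hval2] at h1
    have h2 : (2*σ:ℝ) ^ (1-γ) ≤ (1+σ) ^ (1-γ) :=
      Real.rpow_le_rpow_of_nonpos (by linarith) (by linarith) (by linarith)
    have h3 : (2*σ:ℝ) ^ (1-γ) = (2:ℝ)^(1-γ) * σ^(1-γ) :=
      Real.mul_rpow (by norm_num) hσ.le
    have h4 : σ ^ (1-γ) ≤ (2:ℝ)^(γ-1) * (1+σ)^(1-γ) := by
      have h5 : (2:ℝ) ^ (γ-1) * ((2:ℝ)^(1-γ) * σ^(1-γ)) = σ^(1-γ) := by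
        rw [← mul_assoc, ← Real.rpow_add two_pos]
        norm_num
      calc σ ^ (1-γ) = (2:ℝ) ^ (γ-1) * ((2*σ:ℝ) ^ (1-γ)) := by rw [h3, h5]
        _ ≤ (2:ℝ)^(γ-1) * (1+σ)^(1-γ) := mul_le_mul_of_nonneg_left h2 h2pos.le
    have hp1 : (0:ℝ) < (1+σ)^(1-γ) := Real.rpow_pos_of_pos (by linarith) _
    calc ‖∫ s in Ioi (0:ℝ), f s‖ ≤ C₀ * (σ ^ (1-γ) / (γ-1)) := h1
      _ = (C₀/(γ-1)) * σ^(1-γ) := by ring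
      _ ≤ (C₀/(γ-1)) * ((2:ℝ)^(γ-1) * (1+σ)^(1-γ)) :=
          mul_le_mul_of_nonneg_left h4 (by positivity)
      _ = (C₀/(γ-1)) * (2:ℝ)^(γ-1) * (1+σ)^(1-γ) := by ring
      _ ≤ ((2*M + C₀/(γ-1) + 1) * (2:ℝ)^(γ-1)) * (1+σ)^(1-γ) := by
          have hd : 0 ≤ C₀/(γ-1) := div_nonneg hC₀ hγ1.le
          exact mul_le_mul_of_nonneg_right
            (mul_le_mul_of_nonneg_right (by linarith) h2pos.le) hp1.le
      _ = ((2:ℝ)^(γ-1) * (2*M + C₀/(γ-1) + 1)) * (1+σ)^(1-γ) := by ring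
end
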